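/- In the single-field General Lotto game with Scouts with budgets B, R > 0 and detection probability u ∈ [0,1], if B/R ≤ u, then the value of the game (Blue's optimal win probability) equals B/R. In particular, Red playing the constant allocation X* = R and Blue calling with probability B/(uR) upon revelation (and allocating 0 otherwise) are optimal strategies. -/
import Mathlib


open MeasureTheory Set

/-- A strategy for Red in the General Lotto game with Scouts: the law of a nonnegative
random variable `X` with `E[X] ≤ R`. -/
structure RedStrategy (R : ℝ) where
  μ : Measure ℝ
  prob : IsProbabilityMeasure μ
  nonneg : μ (Iio 0) = 0
  budget : ∫⁻ x, ENNReal.ofReal x ∂μ ≤ ENNReal.ofReal R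

/-- A strategy for Blue in GL-S(B,R,u): a calling probability `t x ∈ [0,1]` used when
Red's allocation `x` is revealed (probability `u`), and the law `ν` of the nonnegative
allocation `Z` used when it is not revealed.  Feasibility: for every feasible Red
strategy, `u·E[t(X)·X] + (1-u)·E[Z] ≤ B`. -/
structure BlueStrategy (B R u : ℝ) where
  t : ℝ → ℝ
  t_mble : Measurable t
  t_mem : ∀ x, t x ∈ Icc (0 : ℝ) 1
  ν : Measure ℝ
  prob : IsProbabilityMeasure ν
  nonneg : ν (Iio 0) = 0
  budget : ∀ σR : RedStrategy R,
    ENNReal.ofReal u * ∫⁻ x, ENNReal.ofReal (t x * x) ∂σR.μ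
      + ENNReal.ofReal (1 - u) * ∫⁻ z, ENNReal.ofReal z ∂ν ≤ ENNReal.ofReal B

/-- Expected payoff to Blue (his win probability):
`u·E[t(X)] + (1-u)·P(Z ≥ X)`, ties going to Blue. -/
noncomputable def payoff {B R u : ℝ} (σB : BlueStrategy B R u) (σR : RedStrategy R) :
    ENNReal :=
  ENNReal.ofReal u * ∫⁻ x, ENNReal.ofReal (σB.t x) ∂σR.μ
    + ENNReal.ofReal (1 - u) * ∫⁻ x, σB.ν {z | x ≤ z} ∂σR.μ

/-- In GL-S(B,R,u) with B, R > 0, u ∈ [0,1] and B/R ≤ u, the value of the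
game equals B/R; in particular Red playing the constant allocation R and Blue calling
with probability B/(uR) upon revelation (allocating 0 otherwise) are optimal. -/
theorem stmt_7 (B R u : ℝ) (hB : 0 < B) (hR : 0 < R) (hu : u ∈ Icc (0 : ℝ) 1)
    (hcase : B / R ≤ u) :
    ∃ (σB : BlueStrategy B R u) (σR : RedStrategy R),
      (∀ σR' : RedStrategy R, ENNReal.ofReal (B / R) ≤ payoff σB σR') ∧
      (∀ σB' : BlueStrategy B R u, payoff σB' σR ≤ ENNReal.ofReal (B / R)) ∧
      σR.μ = Measure.dirac R ∧
      σB.t = (fun _ => B / (u * R)) ∧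
      σB.ν = Measure.dirac 0 := by
  have hu0 : 0 < u := lt_of_lt_of_le (div_pos hB hR) hcase
  have huR : 0 < u * R := mul_pos hu0 hR
  have hBle : B ≤ u * R := (div_le_iff₀ hR).mp hcase
  have hc0 : 0 ≤ B / (u * R) := le_of_lt (div_pos hB huR)
  have hc1 : B / (u * R) ≤ 1 := (div_le_one huR).mpr hBle
  -- Red strategy: dirac R
  have hRedBudget : (∫⁻ x, ENNReal.ofReal x ∂(Measure.dirac R)) ≤ ENNReal.ofReal R := by
    rw [lintegral_dirac]
  refine ⟨⟨fun _ => B / (u * R), measurable_const, fun x => ⟨hc0, hc1⟩,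
      Measure.dirac 0, inferInstance, ?_, ?_⟩,
      ⟨Measure.dirac R, inferInstance, ?_, hRedBudget⟩, ?_, ?_, rfl, rfl, rfl⟩
  · simp [Measure.dirac_apply', measurableSet_Iio, hR.le]
  · intro σR
    have h2 : (∫⁻ z, ENNReal.ofReal z ∂(Measure.dirac (0:ℝ))) = 0 := by
      rw [lintegral_dirac]; simp
    rw [h2, mul_zero, add_zero]
    have h1 : (∫⁻ x, ENNReal.ofReal (B / (u * R) * x) ∂σR.μ)
        = ENNReal.ofReal (B / (u * R)) * ∫⁻ x, ENNReal.ofReal x ∂σR.μ := by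
      rw [← lintegral_const_mul _ ENNReal.measurable_ofReal]
      congr 1; funext x; rw [ENNReal.ofReal_mul hc0]
    rw [h1]
    calc ENNReal.ofReal u * (ENNReal.ofReal (B / (u * R)) * ∫⁻ x, ENNReal.ofReal x ∂σR.μ)
        ≤ ENNReal.ofReal u * (ENNReal.ofReal (B / (u * R)) * ENNReal.ofReal R) := by
          gcongr; exact σR.budget
      _ = ENNReal.ofReal (u * (B / (u * R) * R)) := by
          rw [ENNReal.ofReal_mul hu0.le, ENNReal.ofReal_mul hc0]
      _ = ENNReal.ofReal B := by
          congr 1; field_simp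
  · simp [Measure.dirac_apply', measurableSet_Iio, hR.le]
  · intro σR'
    have hμ : σR'.μ Set.univ = 1 := σR'.prob.measure_univ
    have h1 : (∫⁻ x, ENNReal.ofReal (B / (u * R)) ∂σR'.μ) = ENNReal.ofReal (B / (u * R)) := by
      rw [lintegral_const, hμ, mul_one]
    calc ENNReal.ofReal (B / R)
        = ENNReal.ofReal u * ENNReal.ofReal (B / (u * R)) := by
          rw [← ENNReal.ofReal_mul hu0.le]; congr 1; field_simp
      _ ≤ _ := by
          unfold payoff
          rw [h1]
          exact le_add_of_nonneg_right bot_le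
  · intro σB'
    have hbudget := σB'.budget ⟨Measure.dirac R, inferInstance, by
      simp [Measure.dirac_apply', measurableSet_Iio, hR.le], hRedBudget⟩
    simp only [lintegral_dirac] at hbudget ⊢
    -- payoff = ofReal u * ofReal (t R) + ofReal (1-u) * ν {z | R ≤ z}
    unfold payoff
    simp only [lintegral_dirac]
    have hRne : ENNReal.ofReal R ≠ 0 := by simp [hR.not_ge, hR]
    have hRtop : ENNReal.ofReal R ≠ ⊤ := ENNReal.ofReal_ne_top
    rw [show ENNReal.ofReal (B / R) = ENNReal.ofReal B / ENNReal.ofReal R from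
      (ENNReal.ofReal_div_of_pos hR)]
    rw [ENNReal.le_div_iff_mul_le (Or.inl hRne) (Or.inl hRtop)]
    have hMarkov : σB'.ν {z | R ≤ z} * ENNReal.ofReal R ≤ ∫⁻ z, ENNReal.ofReal z ∂σB'.ν := by
      calc σB'.ν {z | R ≤ z} * ENNReal.ofReal R
          ≤ σB'.ν {z | ENNReal.ofReal R ≤ ENNReal.ofReal z} * ENNReal.ofReal R := by
            have hsub : {z : ℝ | R ≤ z} ⊆ {z : ℝ | ENNReal.ofReal R ≤ ENNReal.ofReal z} :=
              fun z hz => ENNReal.ofReal_le_ofReal hz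
            exact mul_le_mul_left (measure_mono hsub) _
        _ = ENNReal.ofReal R * σB'.ν {z | ENNReal.ofReal R ≤ ENNReal.ofReal z} := mul_comm _ _
        _ ≤ _ := mul_meas_ge_le_lintegral₀
            (ENNReal.measurable_ofReal.comp measurable_id).aemeasurable _
    calc (ENNReal.ofReal u * ENNReal.ofReal (σB'.t R)
          + ENNReal.ofReal (1 - u) * σB'.ν {z | R ≤ z}) * ENNReal.ofReal R
        = ENNReal.ofReal u * (ENNReal.ofReal (σB'.t R) * ENNReal.ofReal R)
          + ENNReal.ofReal (1 - u) * (σB'.ν {z | R ≤ z} * ENNReal.ofReal R) := by ring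
      _ ≤ ENNReal.ofReal u * ENNReal.ofReal (σB'.t R * R)
          + ENNReal.ofReal (1 - u) * ∫⁻ z, ENNReal.ofReal z ∂σB'.ν := by
          rw [ENNReal.ofReal_mul (σB'.t_mem R).1]
          exact add_le_add le_rfl (mul_le_mul_right hMarkov _)
      _ ≤ ENNReal.ofReal B := hbudget
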